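/- arXiv:2605.28274 — 3 statements merged into one kernel-verified Lean document; each statement's English description precedes it below -/
import Mathlib

section
/- Let A be an n×n real matrix, B an m×m real matrix, C1 an n×s real matrix and C2 an m×s real matrix. Let F := I_m ⊗ A + Bᵀ ⊗ I_n (an mn×mn matrix) and c := vec(C1 C2ᵀ) ∈ ℝ^{mn}. Then for every k ≥ 1, the Krylov subspace K_k(F,c) := span(c, Fc, F²c, …, F^{k-1}c) is contained in the Kronecker product of subspaces K_k^□(Bᵀ,C2) ⊗ K_k^□(A,C1) := span{ w ⊗ v : v ∈ K_k^□(A,C1), w ∈ K_k^□(Bᵀ,C2) }. -/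
/-!
Since `F (vec X) = vec (A X + X B)`, the vector `Fᵖ c` is a combination of the
`vec (Aʲ C1 C2ᵀ Bˡ)` with `j + l = p`, and `vec (Aʲ C1 (Bᵀˡ C2)ᵀ)` is the sum over `t` of
`(Bᵀˡ C2 eₜ) ⊗ (Aʲ C1 eₜ)`, a sum of Kronecker products of block Krylov vectors.
-/

open Matrix Kronecker

noncomputable section

/-- `vec X` stacks the columns of `X` on top of each other; the entry of `vec X`
indexed by `(j, i)` (column `j`, row `i`) is `X i j`. -/
def vec {n m : ℕ} (X : Matrix (Fin n) (Fin m) ℝ) : Fin m × Fin n → ℝ :=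
  fun p => X p.2 p.1

/-- Kronecker product of two vectors, viewed as one-column matrices. -/
def vecKron {m n : ℕ} (w : Fin m → ℝ) (v : Fin n → ℝ) : Fin m × Fin n → ℝ :=
  fun p => w p.1 * v p.2

/-- The Krylov subspace `K_k(F, c) = span(c, Fc, …, F^{k-1}c)`. -/
def krylov {N : Type*} [Fintype N] [DecidableEq N] (F : Matrix N N ℝ) (c : N → ℝ) (k : ℕ) :
    Submodule ℝ (N → ℝ) :=
  Submodule.span ℝ (Set.range fun i : Fin k => (F ^ (i : ℕ)) *ᵥ c)

/-- The block Krylov matrix `[C, AC, A²C, …, A^{k-1}C]`. -/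
def krylovMat {n s : ℕ} (A : Matrix (Fin n) (Fin n) ℝ) (C : Matrix (Fin n) (Fin s) ℝ) (k : ℕ) :
    Matrix (Fin n) (Fin k × Fin s) ℝ :=
  Matrix.of fun i p => (A ^ (p.1 : ℕ) * C) i p.2

/-- The block Krylov subspace `K_k^□(A, C)`: the range (column space) of
`[C, AC, …, A^{k-1}C]`. -/
def blockKrylov {n s : ℕ} (A : Matrix (Fin n) (Fin n) ℝ) (C : Matrix (Fin n) (Fin s) ℝ) (k : ℕ) :
    Submodule ℝ (Fin n → ℝ) :=
  LinearMap.range (krylovMat A C k).mulVecLin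

def kronSpan {m n : ℕ} (W : Submodule ℝ (Fin m → ℝ)) (V : Submodule ℝ (Fin n → ℝ)) :
    Submodule ℝ (Fin m × Fin n → ℝ) :=
  Submodule.span ℝ {z | ∃ v ∈ V, ∃ w ∈ W, z = vecKron w v}

lemma vecKron_mem_kronSpan {m n : ℕ} {W : Submodule ℝ (Fin m → ℝ)}
    {V : Submodule ℝ (Fin n → ℝ)} {w : Fin m → ℝ} {v : Fin n → ℝ} (hw : w ∈ W) (hv : v ∈ V) :
    vecKron w v ∈ kronSpan W V :=
  Submodule.subset_span ⟨v, hv, w, hw, rfl⟩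

lemma vec_eq_matrix_vec {n m : ℕ} (X : Matrix (Fin n) (Fin m) ℝ) : _root_.vec X = X.vec := rfl

lemma vec_mul_transpose {n m s : ℕ} (X : Matrix (Fin n) (Fin s) ℝ) (Y : Matrix (Fin m) (Fin s) ℝ) :
    _root_.vec (X * Yᵀ) = ∑ t : Fin s, vecKron (fun j => Y j t) (fun i => X i t) := by
  ext ⟨j, i⟩
  simp [_root_.vec, vecKron, Matrix.mul_apply, mul_comm]

lemma kroneckerSum_mulVec_vec {n m : ℕ} (A : Matrix (Fin n) (Fin n) ℝ)
    (B : Matrix (Fin m) (Fin m) ℝ) (X : Matrix (Fin n) (Fin m) ℝ) :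
    ((1 : Matrix (Fin m) (Fin m) ℝ) ⊗ₖ A + Bᵀ ⊗ₖ (1 : Matrix (Fin n) (Fin n) ℝ)) *ᵥ _root_.vec X
      = _root_.vec (A * X + X * B) := by
  simp only [vec_eq_matrix_vec, Matrix.add_mulVec, kronecker_mulVec_vec, Matrix.vec_add,
    transpose_one, transpose_transpose, Matrix.mul_one, Matrix.one_mul]

lemma col_pow_mul_mem_blockKrylov {n s : ℕ} (A : Matrix (Fin n) (Fin n) ℝ)
    (C : Matrix (Fin n) (Fin s) ℝ) {k j : ℕ} (hj : j < k) (t : Fin s) :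
    (fun i => (A ^ j * C) i t) ∈ blockKrylov A C k := by
  refine ⟨Pi.single (⟨j, hj⟩, t) 1, ?_⟩
  ext i
  simp [krylovMat, mulVec]

section

variable {n m s : ℕ} (A : Matrix (Fin n) (Fin n) ℝ) (B : Matrix (Fin m) (Fin m) ℝ)
  (C1 : Matrix (Fin n) (Fin s) ℝ) (C2 : Matrix (Fin m) (Fin s) ℝ)

lemma vec_pow_mul_mul_pow_mem_kronSpan {k j l : ℕ} (hj : j < k) (hl : l < k) :
    _root_.vec (A ^ j * C1 * C2ᵀ * B ^ l) ∈ kronSpan (blockKrylov Bᵀ C2 k) (blockKrylov A C1 k) := by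
  have hfactor : A ^ j * C1 * C2ᵀ * B ^ l = (A ^ j * C1) * (Bᵀ ^ l * C2)ᵀ := by
    rw [transpose_mul, transpose_pow, transpose_transpose, Matrix.mul_assoc]
  rw [hfactor, vec_mul_transpose]
  exact Submodule.sum_mem _ fun t _ => vecKron_mem_kronSpan
    (col_pow_mul_mem_blockKrylov Bᵀ C2 hl t) (col_pow_mul_mem_blockKrylov A C1 hj t)

/-- Each application of `F` raises `j + l` by one in the terms `vec (A^j C1 C2ᵀ B^l)`. -/
lemma kroneckerSum_pow_mulVec_mem_kronSpan {k : ℕ} (p : ℕ) :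
    ∀ j l : ℕ, j + l + p < k →
      ((1 : Matrix (Fin m) (Fin m) ℝ) ⊗ₖ A + Bᵀ ⊗ₖ (1 : Matrix (Fin n) (Fin n) ℝ)) ^ p *ᵥ
          _root_.vec (A ^ j * C1 * C2ᵀ * B ^ l) ∈
        kronSpan (blockKrylov Bᵀ C2 k) (blockKrylov A C1 k) := by
  induction p with
  | zero =>
    intro j l h
    simpa using vec_pow_mul_mul_pow_mem_kronSpan A B C1 C2 (by omega : j < k) (by omega : l < k)
  | succ p ih =>
    intro j l h
    have hstep : A * (A ^ j * C1 * C2ᵀ * B ^ l) + A ^ j * C1 * C2ᵀ * B ^ l * B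
        = A ^ (j + 1) * C1 * C2ᵀ * B ^ l + A ^ j * C1 * C2ᵀ * B ^ (l + 1) := by
      rw [pow_succ', pow_succ]
      simp only [Matrix.mul_assoc]
    rw [pow_succ, ← mulVec_mulVec, kroneckerSum_mulVec_vec, hstep, vec_eq_matrix_vec,
      Matrix.vec_add, mulVec_add]
    exact Submodule.add_mem _ (ih (j + 1) l (by omega)) (ih j (l + 1) (by omega))

end

theorem stmt0_general (n m s : ℕ) (A : Matrix (Fin n) (Fin n) ℝ) (B : Matrix (Fin m) (Fin m) ℝ)
    (C1 : Matrix (Fin n) (Fin s) ℝ) (C2 : Matrix (Fin m) (Fin s) ℝ) (k : ℕ) :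
    krylov ((1 : Matrix (Fin m) (Fin m) ℝ) ⊗ₖ A + Bᵀ ⊗ₖ (1 : Matrix (Fin n) (Fin n) ℝ))
        (_root_.vec (C1 * C2ᵀ)) k ≤
      Submodule.span ℝ
        {z : Fin m × Fin n → ℝ |
          ∃ v ∈ blockKrylov A C1 k, ∃ w ∈ blockKrylov Bᵀ C2 k, z = vecKron w v} := by
  change _ ≤ kronSpan _ _
  rw [krylov, Submodule.span_le]
  rintro _ ⟨⟨p, hp⟩, rfl⟩
  simpa using kroneckerSum_pow_mulVec_mem_kronSpan A B C1 C2 p 0 0 (by omega)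

theorem stmt0 (n m s : ℕ) (A : Matrix (Fin n) (Fin n) ℝ) (B : Matrix (Fin m) (Fin m) ℝ)
    (C1 : Matrix (Fin n) (Fin s) ℝ) (C2 : Matrix (Fin m) (Fin s) ℝ) (k : ℕ) (hk : 1 ≤ k) :
    krylov ((1 : Matrix (Fin m) (Fin m) ℝ) ⊗ₖ A + Bᵀ ⊗ₖ (1 : Matrix (Fin n) (Fin n) ℝ))
        (_root_.vec (C1 * C2ᵀ)) k ≤
      Submodule.span ℝ
        {z : Fin m × Fin n → ℝ |
          ∃ v ∈ blockKrylov A C1 k, ∃ w ∈ blockKrylov Bᵀ C2 k, z = vecKron w v} :=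
  stmt0_general n m s A B C1 C2 k
end
end

section
/- Let A ∈ ℝ^{n×n}, B ∈ ℝ^{m×m}, C1 ∈ ℝ^{n×s}, C2 ∈ ℝ^{m×s}, F := I_m ⊗ A + Bᵀ ⊗ I_n, and c := vec(C1 C2ᵀ). Let V ∈ ℝ^{n×p} be a matrix with orthonormal columns whose range equals the block Krylov subspace K_k^□(A,C1) (the range of [C1, AC1, …, A^{k-1}C1]), and let W ∈ ℝ^{m×q} be a matrix with orthonormal columns whose range equals K_k^□(Bᵀ,C2) (the range of [C2, BᵀC2, …, (Bᵀ)^{k-1}C2]). Then for every Z ∈ ℝ^{n×m} with vec(Z) ∈ K_k(F,c) := span(c, Fc, …, F^{k-1}c), there exists a matrix Ẑ ∈ ℝ^{p×q} such that Z = V Ẑ Wᵀ. -/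
/-!
Left multiplication by `A` and right multiplication by `B` commute, so the binomial theorem
expands `(I ⊗ A + Bᵀ ⊗ I)^i vec(C₁C₂ᵀ)` into `vec (A^j C₁ C₂ᵀ B^l)` with `j + l = i`.
For `j, l < k` the columns of `A^j C₁` lie in `range V` and those of `(Bᵀ)^l C₂` in `range W`,
so `A^j C₁ C₂ᵀ B^l = V Y Wᵀ`; these are exactly the matrices whose `vec` lies in `range (W ⊗ V)`.
-/

open Matrix Kronecker

noncomputable section

namespace Matrix

theorem kronecker_pow {R m n : Type*} [CommSemiring R] [Fintype m] [Fintype n]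
    [DecidableEq m] [DecidableEq n] (A : Matrix m m R) (B : Matrix n n R) (i : ℕ) :
    (A ⊗ₖ B) ^ i = (A ^ i) ⊗ₖ (B ^ i) := by
  induction i with
  | zero => simp
  | succ i ih => rw [pow_succ, pow_succ, pow_succ, ih, mul_kronecker_mul]

open Finset in
theorem kroneckerSum_pow_mulVec_vec {R m n : Type*} [CommSemiring R] [Fintype m]
    [Fintype n] [DecidableEq m] [DecidableEq n]
    (A : Matrix n n R) (B : Matrix m m R) (X : Matrix n m R) (i : ℕ) :
    (1 ⊗ₖ A + Bᵀ ⊗ₖ 1) ^ i *ᵥ X.vec =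
      ∑ jl ∈ antidiagonal i, i.choose jl.1 • (A ^ jl.1 * X * B ^ jl.2).vec := by
  have hcomm : Commute ((1 : Matrix m m R) ⊗ₖ A) (Bᵀ ⊗ₖ (1 : Matrix n n R)) := by
    simp only [Commute, SemiconjBy, ← mul_kronecker_mul, Matrix.one_mul, Matrix.mul_one]
  rw [hcomm.add_pow', Matrix.sum_mulVec]
  refine sum_congr rfl fun jl _ => ?_
  rw [smul_mulVec, kronecker_pow, kronecker_pow, one_pow, one_pow, ← mul_kronecker_mul,
    Matrix.one_mul, Matrix.mul_one, kronecker_mulVec_vec, transpose_pow, transpose_transpose]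

theorem vec_mem_range_kronecker_iff {R l m n p : Type*} [CommSemiring R] [Fintype n]
    [Fintype p]
    (V : Matrix l n R) (W : Matrix m p R) (X : Matrix l m R) :
    X.vec ∈ LinearMap.range (W ⊗ₖ V).mulVecLin ↔ ∃ Y : Matrix n p R, X = V * Y * Wᵀ := by
  constructor
  · rintro ⟨y, hy⟩
    obtain ⟨Y, rfl⟩ := vec_bijective.2 y
    exact ⟨Y, vec_inj.1 (by rw [← hy, mulVecLin_apply, kronecker_mulVec_vec])⟩
  · rintro ⟨Y, rfl⟩
    exact ⟨Y.vec, kronecker_mulVec_vec V Y W⟩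

theorem exists_eq_mul_of_range_le {R l m n : Type*} [CommSemiring R] [Fintype m]
    [Fintype n] [DecidableEq n] {M : Matrix l n R} {V : Matrix l m R}
    (h : LinearMap.range M.mulVecLin ≤ LinearMap.range V.mulVecLin) :
    ∃ Y : Matrix m n R, M = V * Y := by
  choose y hy using fun c => h ⟨Pi.single c 1, rfl⟩
  refine ⟨(of y)ᵀ, ext fun i c => ?_⟩
  have hcol := congrFun (hy c) i
  rw [mulVecLin_apply, mulVecLin_apply, mulVec_single_one, col_apply] at hcol
  rw [← hcol]
  rfl

end Matrix

theorem range_pow_mul_le_range_krylovMat {n s : ℕ} (A : Matrix (Fin n) (Fin n) ℝ)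
    (C : Matrix (Fin n) (Fin s) ℝ) {j k : ℕ} (hj : j < k) :
    LinearMap.range (A ^ j * C).mulVecLin ≤ LinearMap.range (krylovMat A C k).mulVecLin := by
  rw [range_mulVecLin, range_mulVecLin]
  exact Submodule.span_mono (Set.range_subset_iff.2 fun c => ⟨(⟨j, hj⟩, c), rfl⟩)

section KroneckerSum

variable {n m s p q k : ℕ} {A : Matrix (Fin n) (Fin n) ℝ} {B : Matrix (Fin m) (Fin m) ℝ}
  {C1 : Matrix (Fin n) (Fin s) ℝ} {C2 : Matrix (Fin m) (Fin s) ℝ}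
  {V : Matrix (Fin n) (Fin p) ℝ} {W : Matrix (Fin m) (Fin q) ℝ}

theorem vec_pow_mul_mul_pow_mem_range_kronecker
    (hV : LinearMap.range (krylovMat A C1 k).mulVecLin ≤ LinearMap.range V.mulVecLin)
    (hW : LinearMap.range (krylovMat Bᵀ C2 k).mulVecLin ≤ LinearMap.range W.mulVecLin)
    {j l : ℕ} (hj : j < k) (hl : l < k) :
    (A ^ j * C1 * C2ᵀ * B ^ l).vec ∈ LinearMap.range (W ⊗ₖ V).mulVecLin := by
  obtain ⟨Y1, hY1⟩ :=
    exists_eq_mul_of_range_le ((range_pow_mul_le_range_krylovMat A C1 hj).trans hV)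
  obtain ⟨Y2, hY2⟩ :=
    exists_eq_mul_of_range_le ((range_pow_mul_le_range_krylovMat Bᵀ C2 hl).trans hW)
  have hY2' : C2ᵀ * B ^ l = Y2ᵀ * Wᵀ := by
    rw [← transpose_mul, ← hY2, transpose_mul, transpose_pow, transpose_transpose]
  refine (vec_mem_range_kronecker_iff V W _).2 ⟨Y1 * Y2ᵀ, ?_⟩
  rw [Matrix.mul_assoc _ C2ᵀ, hY2', hY1]
  simp only [Matrix.mul_assoc]

theorem krylov_kroneckerSum_le_range_kronecker
    (hV : LinearMap.range (krylovMat A C1 k).mulVecLin ≤ LinearMap.range V.mulVecLin)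
    (hW : LinearMap.range (krylovMat Bᵀ C2 k).mulVecLin ≤ LinearMap.range W.mulVecLin) :
    krylov (1 ⊗ₖ A + Bᵀ ⊗ₖ 1) (C1 * C2ᵀ).vec k ≤ LinearMap.range (W ⊗ₖ V).mulVecLin := by
  refine Submodule.span_le.2 (Set.range_subset_iff.2 fun i => ?_)
  rw [SetLike.mem_coe, kroneckerSum_pow_mulVec_vec]
  refine Submodule.sum_mem _ fun jl hjl => nsmul_mem ?_ _
  rw [Finset.HasAntidiagonal.mem_antidiagonal] at hjl
  rw [← Matrix.mul_assoc]
  exact vec_pow_mul_mul_pow_mem_range_kronecker hV hW (by omega) (by omega)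

end KroneckerSum

-- The `vec` of the statement is definitionally `Matrix.vec`.
theorem stmt7_general (n m s p q : ℕ) (A : Matrix (Fin n) (Fin n) ℝ) (B : Matrix (Fin m) (Fin m) ℝ)
    (C1 : Matrix (Fin n) (Fin s) ℝ) (C2 : Matrix (Fin m) (Fin s) ℝ) (k : ℕ)
    (V : Matrix (Fin n) (Fin p) ℝ) (W : Matrix (Fin m) (Fin q) ℝ)
    (hVrange : LinearMap.range V.mulVecLin = LinearMap.range (krylovMat A C1 k).mulVecLin)
    (hWrange : LinearMap.range W.mulVecLin = LinearMap.range (krylovMat Bᵀ C2 k).mulVecLin) :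
    ∀ Z : Matrix (Fin n) (Fin m) ℝ,
      _root_.vec Z ∈ krylov
        ((1 : Matrix (Fin m) (Fin m) ℝ) ⊗ₖ A + Bᵀ ⊗ₖ (1 : Matrix (Fin n) (Fin n) ℝ))
        (_root_.vec (C1 * C2ᵀ)) k →
      ∃ Zh : Matrix (Fin p) (Fin q) ℝ, Z = V * Zh * Wᵀ := fun Z hZ =>
  (vec_mem_range_kronecker_iff V W Z).1
    (krylov_kroneckerSum_le_range_kronecker hVrange.ge hWrange.ge hZ)

theorem stmt7 (n m s p q : ℕ) (A : Matrix (Fin n) (Fin n) ℝ) (B : Matrix (Fin m) (Fin m) ℝ)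
    (C1 : Matrix (Fin n) (Fin s) ℝ) (C2 : Matrix (Fin m) (Fin s) ℝ) (k : ℕ)
    (V : Matrix (Fin n) (Fin p) ℝ) (W : Matrix (Fin m) (Fin q) ℝ)
    (hVorth : Vᵀ * V = 1) (hWorth : Wᵀ * W = 1)
    (hVrange : LinearMap.range V.mulVecLin = LinearMap.range (krylovMat A C1 k).mulVecLin)
    (hWrange : LinearMap.range W.mulVecLin = LinearMap.range (krylovMat Bᵀ C2 k).mulVecLin) :
    ∀ Z : Matrix (Fin n) (Fin m) ℝ,
      _root_.vec Z ∈ krylov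
        ((1 : Matrix (Fin m) (Fin m) ℝ) ⊗ₖ A + Bᵀ ⊗ₖ (1 : Matrix (Fin n) (Fin n) ℝ))
        (_root_.vec (C1 * C2ᵀ)) k →
      ∃ Zh : Matrix (Fin p) (Fin q) ℝ, Z = V * Zh * Wᵀ :=
  stmt7_general n m s p q A B C1 C2 k V W hVrange hWrange
end
end

section
/- Let A ∈ ℝ^{n×n}, B ∈ ℝ^{m×m}. Suppose V_k ∈ ℝ^{n×ks}, V_{k+1} ∈ ℝ^{n×(k+1)s}, W_k ∈ ℝ^{m×ks}, W_{k+1} ∈ ℝ^{m×(k+1)s} are such that V_k consists of the first ks columns of V_{k+1}, W_k consists of the first ks columns of W_{k+1}, and the block Krylov (Arnoldi-type) relations A V_k = V_{k+1} H and Bᵀ W_k = W_{k+1} G hold for some H, G ∈ ℝ^{(k+1)s×ks}. Then for every X̂ ∈ ℝ^{ks×ks}, with X := V_k X̂ W_kᵀ, one has AX + XB = V_{k+1} · ( [H X̂, O_{(k+1)s,s}] + [X̂ Gᵀ ; O_{s,(k+1)s}] ) · W_{k+1}ᵀ, where [H X̂, O_{(k+1)s,s}] ∈ ℝ^{(k+1)s×(k+1)s}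 pads H X̂ on the right with s zero columns, and [X̂ Gᵀ ; O_{s,(k+1)s}] ∈ ℝ^{(k+1)s×(k+1)s} pads X̂ Gᵀ below with s zero rows. -/
/-!
With `V₁ = V.toCols₁` and `W₁ = W.toCols₁` the leading column blocks, a zero-padded block
only meets the leading block of its neighbour: `V * [M; 0] = V₁ * M` and `[M, 0] * Wᵀ = M * W₁ᵀ`.
So the right-hand side is `V * H * X * W₁ᵀ + V₁ * X * (W * G)ᵀ`, and the two Krylov relations
turn these terms into `A * (V₁ * X * W₁ᵀ)` and `V₁ * X * (Bᵀ * W₁)ᵀ = (V₁ * X * W₁ᵀ) * B`.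
-/

open Matrix

namespace Matrix

variable {R l m n q : Type*} [Fintype m] [Fintype n]

theorem mul_fromRows_zero [Semiring R] (N : Matrix l (m ⊕ n) R) (M : Matrix m q R) :
    N * fromRows M (0 : Matrix n q R) = N.toCols₁ * M := by
  simpa only [fromCols_toCols, Matrix.mul_zero, add_zero] using
    fromCols_mul_fromRows N.toCols₁ N.toCols₂ M 0

theorem fromCols_zero_mul [Semiring R] (M : Matrix l m R) (N : Matrix (m ⊕ n) q R) :
    fromCols M (0 : Matrix l n R) * N = M * N.toRows₁ := by
  simpa only [fromRows_toRows, Matrix.zero_mul, add_zero] using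
    fromCols_mul_fromRows M 0 N.toRows₁ N.toRows₂

theorem sylvester_eq_of_krylov [CommSemiring R] [Fintype l] [Fintype q] (A : Matrix l l R)
    (B : Matrix q q R) (V : Matrix l (m ⊕ n) R) (W : Matrix q (m ⊕ n) R)
    (H G : Matrix (m ⊕ n) m R) (hAV : A * V.toCols₁ = V * H) (hBW : Bᵀ * W.toCols₁ = W * G)
    (X : Matrix m m R) :
    A * (V.toCols₁ * X * W.toCols₁ᵀ) + V.toCols₁ * X * W.toCols₁ᵀ * B =
      V * (fromCols (H * X) 0 + fromRows (X * Gᵀ) 0) * Wᵀ := by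
  have hA :
      V * fromCols (H * X) (0 : Matrix (m ⊕ n) n R) * Wᵀ =
        A * (V.toCols₁ * X * W.toCols₁ᵀ) := by
    rw [Matrix.mul_assoc, fromCols_zero_mul, ← Matrix.mul_assoc, ← Matrix.mul_assoc, ← hAV]
    simp only [Matrix.mul_assoc]
    rfl
  have hB :
      V * fromRows (X * Gᵀ) (0 : Matrix n (m ⊕ n) R) * Wᵀ =
        V.toCols₁ * X * W.toCols₁ᵀ * B := by
    rw [mul_fromRows_zero, Matrix.mul_assoc, Matrix.mul_assoc X, ← transpose_mul, ← hBW,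
      transpose_mul, transpose_transpose]
    simp only [Matrix.mul_assoc]
  rw [Matrix.mul_add, Matrix.add_mul, hA, hB]

end Matrix

theorem stmt10 (n m s k : ℕ) (A : Matrix (Fin n) (Fin n) ℝ) (B : Matrix (Fin m) (Fin m) ℝ)
    (Vk : Matrix (Fin n) (Fin (k * s)) ℝ) (Wk : Matrix (Fin m) (Fin (k * s)) ℝ)
    (Vk1 : Matrix (Fin n) (Fin (k * s) ⊕ Fin s) ℝ)
    (Wk1 : Matrix (Fin m) (Fin (k * s) ⊕ Fin s) ℝ)
    (hVfirst : ∀ i j, Vk i j = Vk1 i (Sum.inl j))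
    (hWfirst : ∀ i j, Wk i j = Wk1 i (Sum.inl j))
    (H G : Matrix (Fin (k * s) ⊕ Fin s) (Fin (k * s)) ℝ)
    (hAV : A * Vk = Vk1 * H) (hBW : Bᵀ * Wk = Wk1 * G)
    (Xh : Matrix (Fin (k * s)) (Fin (k * s)) ℝ) :
    A * (Vk * Xh * Wkᵀ) + (Vk * Xh * Wkᵀ) * B =
      Vk1 * (Matrix.fromCols (H * Xh) 0 + Matrix.fromRows (Xh * Gᵀ) 0) * Wk1ᵀ := by
  obtain rfl : Vk = Vk1.toCols₁ := Matrix.ext hVfirst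
  obtain rfl : Wk = Wk1.toCols₁ := Matrix.ext hWfirst
  exact sylvester_eq_of_krylov A B Vk1 Wk1 H G hAV hBW Xh
end
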